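/- A d-element set Z ⊆ [0,n] occurs as a set of d consecutive elements of some F ∈ ℱ(d,k,n) (i.e., Z = {z_ℓ, z_{ℓ+1}, …, z_{ℓ+d−1}} for some F ∈ ℱ(d,k,n) with elements z_1 < ⋯ < z_p and some 1 ≤ ℓ ≤ p−d+1) if and only if there is an integer i with 0 ≤ i ≤ n−k such that Z is a Gale subset of [i, i+k] and Z contains 0, or contains n, or contains both i and i+k. (These sets are the facets of a shallow triangulation of the boundary of the ordinary polytope P^{d,k,n}.) -/

import Mathlib

/-!
A facet `F = ret_n(X)`, `X = [i, i+2r-1] ∪ Y ∪ [i+k, i+k+2r-1]`, is the retraction of a paired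
set, hence Gale in `[0, n]`, and being Gale passes to subintervals. If the bottom (top) block of
`X` collapses to `0` (to `n`), then `F` has only `2m + 1` points, so a window is all of `F` and
lies in `[0, k]` (in `[n - k, n]`). Otherwise a window of `2m + 1` points must meet both outer
blocks, and counting shows that it spans exactly `k`.

Conversely, a Gale subset `Z` of `[i, i+k]` containing `i` and `i + k` has the form
`[i, c) ∪ Y ∪ (d, i+k]` with `Y` paired, and it is cut out of the facet with outer blocks
`[d+1-k, c-1]` and `[d+1, c-1+k]`. If instead `0 ∈ Z` and `k ∉ Z`, then `Z \ {0}` is paired and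
`Z` is itself the facet whose top block is the top run of `Z \ {0}` and whose bottom block
retracts to `0`; the case `n ∈ Z` is its mirror image under `x ↦ n - x`.

Throughout, a set is paired iff an even number of its points lie above each point outside it.
-/

noncomputable section

open Finset

/-- `retr n X` : the retraction of `X`, clamping each element into `[0,n]`. -/
def retr (n : ℤ) (X : Finset ℤ) : Finset ℤ := X.image fun x => max 0 (min n x)

/-- A finite set is paired if it is a disjoint union of pairs `{y, y+1}`
of consecutive integers. -/
def IsPaired (Y : Finset ℤ) : Prop :=
  ∃ S : Finset ℤ, Y = S ∪ S.image (· + 1) ∧ ∀ a ∈ S, ∀ b ∈ S, a ≠ b → 2 ≤ |a - b|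

/-- Membership in the collection `𝒳_n(d,k)` where `d = 2m+1`:
`X = [i, i+2r-1] ∪ Y ∪ [i+k, i+k+2r-1]` with `1 ≤ r ≤ m`, `Y` a paired
`(d-2r-1)`-element subset of `[i+2r+1, i+k-2]`, and `|ret_n(X)| ≥ d`. -/
def MemX (m k n : ℕ) (X : Finset ℤ) : Prop :=
  ∃ (i : ℤ) (r : ℕ) (Y : Finset ℤ), 1 ≤ r ∧ r ≤ m ∧ IsPaired Y ∧
    Y.card = 2 * (m - r) ∧ Y ⊆ Finset.Icc (i + 2 * r + 1) (i + k - 2) ∧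
    X = Finset.Icc i (i + 2 * r - 1) ∪ Y ∪ Finset.Icc (i + k) (i + k + 2 * r - 1) ∧
    2 * m + 1 ≤ (retr n X).card

/-- `ℱ(d,k,n)` with `d = 2m+1` : the vertex sets of facets of the ordinary
polytope `P^{d,k,n}` (Dinh's theorem). -/
def Facets (m k n : ℕ) : Set (Finset ℤ) :=
  {F | ∃ X : Finset ℤ, MemX m k n X ∧ F = retr n X}

/-- Colexicographic order on finite sets of integers: `F ≺_c G` iff the maximal
element of the symmetric difference belongs to `G`. -/
def ColexLt (F G : Finset ℤ) : Prop :=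
  ∃ z ∈ G, z ∉ F ∧ ∀ w, z < w → (w ∈ F ↔ w ∈ G)

/-- `S` is a Gale subset of `[a,b]`: `S ⊆ [a,b]` and between any two elements of
`[a,b] \ S` there is an even number of elements of `S`. -/
def IsGale (a b : ℤ) (S : Finset ℤ) : Prop :=
  S ⊆ Finset.Icc a b ∧
    ∀ x ∈ Finset.Icc a b, ∀ y ∈ Finset.Icc a b,
      x ∉ S → y ∉ S → x < y → Even ((S ∩ Finset.Ioo x y).card)

/-- The maximal interval (run) of consecutive integers of `F` containing `x`
(empty if `x ∉ F`). -/
def runOf (F : Finset ℤ) (x : ℤ) : Finset ℤ :=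
  F.filter fun y => Finset.Icc (min x y) (max x y) ⊆ F

/-- The maximum element of `F` (0 by convention if `F` is empty). -/
def maxElt (F : Finset ℤ) : ℤ := WithBot.unbotD 0 F.max

/-- `E(S)` : the union over the maximal intervals `[a,b]` of `S` of
`{a+1, a+3, a+5, …} ∩ [a,b]` (the elements in even position of their run). -/
def Epos (S : Finset ℤ) : Finset ℤ :=
  @Finset.filter _
    (fun y => ∃ a : ℤ, Finset.Icc a y ⊆ S ∧ a - 1 ∉ S ∧ Odd (y - a))
    (Classical.decPred _) S

/-- `A^0(F)` for `F ∈ ℱ(d,k,n)`. -/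
def A0 (k n : ℤ) (F : Finset ℤ) : Finset ℤ :=
  if maxElt F ≤ k - 1 then runOf F 0
  else if maxElt F ≤ n - 1 then runOf F (maxElt F - k) ∪ runOf F (maxElt F - k + 2)
  else if n - k ∈ F then runOf F (n - k)
  else ∅

/-- `G_F = E(I^1) ∪ ⋯ ∪ E(I^p) ∪ I^n(F)` where `I^1, …, I^p` are the maximal
intervals of `F` disjoint from `A^0(F) ∪ I^n(F)`, and `I^n(F) = runOf F n`. -/
def GF (k n : ℤ) (F : Finset ℤ) : Finset ℤ :=
  Epos (F \ (A0 k n F ∪ runOf F n)) ∪ runOf F n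

/-- The `t`-th smallest element of `F` (1-indexed). -/
def elt (F : Finset ℤ) (t : ℕ) : ℤ := (F.sort (· ≤ ·)).getD (t - 1) 0

/-- The vertex set of the `t`-th ridge of `P^{d,k,n}` contained in the facet `F`
(with `F = {z_1 < ⋯ < z_p}`, `1 ≤ t ≤ p`):
`F(ẑ_1) = {z_1, …, z_{d-1}}`, `F(ẑ_p) = {z_{p-d+2}, …, z_p}`, and otherwise
`F(ẑ_t) = {z_ℓ : 0 < |ℓ - t| ≤ d-2}`. -/
def ridge (d : ℕ) (F : Finset ℤ) (t : ℕ) : Finset ℤ :=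
  if t = 1 then (Finset.Icc 1 (d - 1)).image (elt F)
  else if t = F.card then (Finset.Icc (F.card - d + 2) F.card).image (elt F)
  else ((Finset.Icc 1 F.card).filter fun l =>
      l ≠ t ∧ ((l : ℤ) - (t : ℤ)).natAbs ≤ d - 2).image (elt F)

/-- `T_{F,ℓ} = {z_ℓ, z_{ℓ+1}, …, z_{ℓ+d-1}}` : the `d` consecutive elements of
`F` starting at position `ℓ` (1-indexed). -/
def Tsimp (d : ℕ) (F : Finset ℤ) (l : ℕ) : Finset ℤ :=
  (Finset.Icc l (l + d - 1)).image (elt F)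

/-- Helper for `U_{F,ℓ}`: `Uaux m k n F j = U_{F, (p-d+1)-j}` where `p = |F|`,
`d = 2m+1`. -/
def Uaux (m k n : ℕ) (F : Finset ℤ) : ℕ → Finset ℤ
  | 0 => GF k n F
  | j + 1 =>
    (Uaux m k n F j \ {maxElt (Tsimp (2 * m + 1) F (F.card - (2 * m + 1) + 1 - j))}) ∪
      {maxElt (Tsimp (2 * m + 1) F (F.card - (2 * m + 1) + 1 - j)) - (k : ℤ),
       maxElt (Tsimp (2 * m + 1) F (F.card - (2 * m + 1) + 1 - j)) - 1}

/-- `U_{F,ℓ}` : `U_{F,p-d+1} = G_F` and, for `1 ≤ ℓ ≤ p-d`,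
`U_{F,ℓ} = (U_{F,ℓ+1} \ {z}) ∪ {z-k, z-1}` where `z = max T_{F,ℓ+1}`. -/
def Usimp (m k n : ℕ) (F : Finset ℤ) (l : ℕ) : Finset ℤ :=
  Uaux m k n F (F.card - (2 * m + 1) + 1 - l)



section Paired

variable {Y P Q : Finset ℤ}

lemma IsPaired.filter (hY : IsPaired Y) (p : ℤ → Prop) [DecidablePred p]
    (hp : ∀ y ∈ Y, y + 1 ∈ Y → (p y ↔ p (y + 1))) : IsPaired (Y.filter p) := by
  obtain ⟨S, rfl, hS⟩ := hY
  have hp' : ∀ s ∈ S, (p s ↔ p (s + 1)) := fun s hs =>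
    hp s (mem_union_left _ hs) (mem_union_right _ (mem_image_of_mem _ hs))
  refine ⟨S.filter p, ?_, fun a ha b hb => hS a (mem_filter.1 ha).1 b (mem_filter.1 hb).1⟩
  ext y
  simp only [mem_filter, mem_union, mem_image]
  constructor
  · rintro ⟨hy | ⟨s, hs, rfl⟩, hpy⟩
    · exact Or.inl ⟨hy, hpy⟩
    · exact Or.inr ⟨s, ⟨hs, (hp' s hs).2 hpy⟩, rfl⟩
  · rintro (⟨hy, hpy⟩ | ⟨s, ⟨hs, hps⟩, rfl⟩)
    · exact ⟨Or.inl hy, hpy⟩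
    · exact ⟨Or.inr ⟨s, hs, rfl⟩, (hp' s hs).1 hps⟩

lemma IsPaired.filter_gt (hY : IsPaired Y) {x : ℤ} (hx : x ∉ Y) :
    IsPaired (Y.filter (x < ·)) :=
  hY.filter _ fun y hy _ => by
    have : y ≠ x := ne_of_mem_of_not_mem hy hx
    omega

lemma IsPaired.filter_lt (hY : IsPaired Y) {x : ℤ} (hx : x ∉ Y) :
    IsPaired (Y.filter (· < x)) :=
  hY.filter _ fun y _ hy => by
    have : y + 1 ≠ x := ne_of_mem_of_not_mem hy hx
    omega

lemma IsPaired.even_card (hY : IsPaired Y) : Even Y.card := by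
  obtain ⟨S, rfl, hS⟩ := hY
  have hdisj : Disjoint S (S.image (· + 1)) := by
    rw [disjoint_left]
    rintro a ha ha'
    obtain ⟨b, hb, rfl⟩ := mem_image.1 ha'
    have := hS _ ha _ hb (by simp)
    rw [show b + 1 - b = 1 by ring] at this
    norm_num at this
  rw [card_union_of_disjoint hdisj, card_image_of_injective _ (add_left_injective 1)]
  exact ⟨_, rfl⟩

lemma IsPaired.even_card_inter_Ioo (hY : IsPaired Y) {x y : ℤ} (hx : x ∉ Y) (hy : y ∉ Y) :
    Even (Y ∩ Ioo x y).card := by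
  have h := ((hY.filter_gt hx).filter_lt fun h => hy (mem_filter.1 h).1).even_card
  convert h using 2
  ext v
  simp [and_assoc]

lemma card_filter_sub_one_lt (Y : Finset ℤ) (x : ℤ) :
    (Y.filter (x - 1 < ·)).card = (Y.filter (x < ·)).card + if x ∈ Y then 1 else 0 := by
  have h : Y.filter (x - 1 < ·) = Y.filter (· = x) ∪ Y.filter (x < ·) := by
    ext y
    simp only [mem_filter, mem_union]
    constructor
    · rintro ⟨hy, hxy⟩
      rcases eq_or_lt_of_le (show x ≤ y by omega) with rfl | hlt
      · exact Or.inl ⟨hy, rfl⟩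
      · exact Or.inr ⟨hy, hlt⟩
    · rintro (⟨hy, rfl⟩ | ⟨hy, hxy⟩) <;> exact ⟨hy, by omega⟩
  rw [h, card_union_of_disjoint (disjoint_filter.2 fun _ _ h => by omega), filter_eq', add_comm]
  split_ifs <;> simp

/-- The pairs are read off from the top: a point of `Y` starts a pair exactly when an odd number
of points of `Y` lie above it. -/
theorem isPaired_iff : IsPaired Y ↔ ∀ x ∉ Y, Even (Y.filter (x < ·)).card := by
  refine ⟨fun hY x hx => (hY.filter_gt hx).even_card, fun h => ?_⟩
  have hstep := card_filter_sub_one_lt Y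
  refine ⟨Y.filter fun y => Odd (Y.filter (y < ·)).card, ?_, ?_⟩
  · ext y
    simp only [mem_union, mem_filter, mem_image]
    constructor
    · intro hy
      by_cases hodd : Odd (Y.filter (y < ·)).card
      · exact Or.inl ⟨hy, hodd⟩
      · rw [Nat.not_odd_iff_even] at hodd
        have hy' : y - 1 ∈ Y := by
          by_contra hy'
          have := h _ hy'
          rw [hstep, if_pos hy] at this
          exact Nat.not_even_iff_odd.2 hodd.add_one this
        refine Or.inr ⟨y - 1, ⟨hy', ?_⟩, by ring⟩
        rw [hstep, if_pos hy]
        exact hodd.add_one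
    · rintro (⟨hy, -⟩ | ⟨s, ⟨hs, hodd⟩, rfl⟩)
      · exact hy
      · by_contra hs'
        have := h _ hs'
        rw [show s = s + 1 - 1 by ring, hstep, if_neg hs', add_zero] at hodd
        exact Nat.not_even_iff_odd.2 hodd this
  · intro a ha b hb hab
    simp only [mem_filter] at ha hb
    have hpred : ∀ s ∈ Y, Odd (Y.filter (s < ·)).card → ¬Odd (Y.filter (s - 1 < ·)).card :=
      fun s hs hodd => by
        rw [hstep, if_pos hs]
        exact Nat.not_odd_iff_even.2 hodd.add_one
    by_contra hlt
    rcases (show b = a + 1 ∨ a = b + 1 by rw [not_le, abs_lt] at hlt; omega) with rfl | rfl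
    · exact hpred _ hb.1 hb.2 (by rw [add_sub_cancel_right]; exact ha.2)
    · exact hpred _ ha.1 ha.2 (by rw [add_sub_cancel_right]; exact hb.2)

lemma isPaired_Icc {a b : ℤ} (h : Even (b + 1 - a)) : IsPaired (Icc a b) := by
  refine isPaired_iff.2 fun x hx => ?_
  rw [mem_Icc, not_and_or, not_le, not_le] at hx
  rcases hx with hx | hx
  · rw [filter_true_of_mem fun y hy => by rw [mem_Icc] at hy; omega, Int.card_Icc]
    obtain ⟨t, ht⟩ := h
    exact ⟨t.toNat, by omega⟩
  · rw [filter_false_of_mem fun y hy => by rw [mem_Icc] at hy; omega, card_empty]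
    exact Even.zero

lemma IsPaired.union (hP : IsPaired P) (hQ : IsPaired Q) (h : Disjoint P Q) :
    IsPaired (P ∪ Q) := by
  refine isPaired_iff.2 fun x hx => ?_
  rw [mem_union, not_or] at hx
  rw [filter_union, card_union_of_disjoint (disjoint_filter_filter h)]
  exact (isPaired_iff.1 hP x hx.1).add (isPaired_iff.1 hQ x hx.2)

end Paired

section Retraction

variable {n : ℤ} {X : Finset ℤ}

lemma mem_retr {v : ℤ} : v ∈ retr n X ↔ ∃ x ∈ X, max 0 (min n x) = v := by
  simp [retr]

lemma retr_union (A B : Finset ℤ) : retr n (A ∪ B) = retr n A ∪ retr n B :=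
  image_union _ _

lemma retr_subset_Icc (hn : 0 ≤ n) : retr n X ⊆ Icc 0 n := by
  intro v hv
  obtain ⟨x, -, rfl⟩ := mem_retr.1 hv
  rw [mem_Icc]
  omega

lemma retr_subset_Icc_of_subset {a b : ℤ} (hX : X ⊆ Icc a b) :
    retr n X ⊆ Icc (max 0 (min n a)) (max 0 (min n b)) := fun v hv => by
  obtain ⟨x, hx, rfl⟩ := mem_retr.1 hv
  have := mem_Icc.1 (hX hx)
  rw [mem_Icc]
  omega

lemma mem_retr_of_mem {x : ℤ} (hx : x ∈ X) (h : x ∈ Icc 0 n) : x ∈ retr n X :=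
  mem_retr.2 ⟨x, hx, by rw [mem_Icc] at h; omega⟩

lemma mem_retr_iff_of_mem_Ioo {v : ℤ} (hv : v ∈ Ioo 0 n) : v ∈ retr n X ↔ v ∈ X := by
  refine ⟨fun h => ?_, fun h => mem_retr_of_mem h (Ioo_subset_Icc_self hv)⟩
  obtain ⟨x, hx, rfl⟩ := mem_retr.1 h
  rw [mem_Ioo] at hv
  rwa [show max 0 (min n x) = x by omega]

lemma retr_eq_self (h : X ⊆ Icc 0 n) : retr n X = X := by
  ext v
  refine ⟨fun hv => ?_, fun hv => mem_retr_of_mem hv (h hv)⟩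
  obtain ⟨x, hx, rfl⟩ := mem_retr.1 hv
  have := mem_Icc.1 (h hx)
  rwa [show max 0 (min n x) = x by omega]

lemma retr_Icc_eq_singleton_zero {a b : ℤ} (hab : a ≤ b) (hb : b ≤ 0) :
    retr n (Icc a b) = {0} := by
  ext v
  rw [mem_retr, mem_singleton]
  constructor
  · rintro ⟨x, hx, rfl⟩
    rw [mem_Icc] at hx
    omega
  · rintro rfl
    exact ⟨a, mem_Icc.2 ⟨le_rfl, hab⟩, by omega⟩

/-- The only points that the retraction moves into `[a, b]` are `0` and `n`. -/
lemma retr_inter_Icc_subset {a b : ℤ} {Z : Finset ℤ} (ha : 0 ≤ a) (hb : b ≤ n) (haZ : a ∈ Z)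
    (hbZ : b ∈ Z) (hXZ : X ∩ Icc a b ⊆ Z) : retr n X ∩ Icc a b ⊆ Z := fun v hv => by
  obtain ⟨hv, hvI⟩ := mem_inter.1 hv
  obtain ⟨x, hx, rfl⟩ := mem_retr.1 hv
  rw [mem_Icc] at hvI
  rcases lt_or_ge x 0 with h0 | h0
  · rwa [show max 0 (min n x) = a by omega]
  rcases lt_or_ge n x with h1 | h1
  · rwa [show max 0 (min n x) = b by omega]
  rw [show max 0 (min n x) = x by omega] at hvI ⊢
  exact hXZ (mem_inter.2 ⟨hx, mem_Icc.2 hvI⟩)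

lemma retr_eq_inter_Icc (hn : 0 ≤ n) (h₀ : ∀ x ∈ X, x < 0 → 0 ∈ X)
    (hₙ : ∀ x ∈ X, n < x → n ∈ X) : retr n X = X ∩ Icc 0 n := by
  ext v
  refine ⟨fun h => ?_, fun h => mem_retr_of_mem (mem_inter.1 h).1 (mem_inter.1 h).2⟩
  obtain ⟨x, hx, rfl⟩ := mem_retr.1 h
  refine mem_inter.2 ⟨?_, mem_Icc.2 (by omega)⟩
  rcases lt_or_ge x 0 with h0 | h0
  · rw [show max 0 (min n x) = 0 by omega]
    exact h₀ x hx h0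
  rcases lt_or_ge n x with h1 | h1
  · rw [show max 0 (min n x) = n by omega]
    exact hₙ x hx h1
  · rwa [show max 0 (min n x) = x by omega]

/-- Strictly between two points of `[0, n]` the retraction changes nothing. -/
lemma isGale_retr (hX : IsPaired X) (hn : 0 ≤ n) : IsGale 0 n (retr n X) := by
  refine ⟨retr_subset_Icc hn, fun x hx y hy hxF hyF _ => ?_⟩
  have hinter : retr n X ∩ Ioo x y = X ∩ Ioo x y := by
    ext v
    simp only [mem_inter]
    refine and_congr_left fun hv => mem_retr_iff_of_mem_Ioo ?_
    rw [mem_Icc] at hx hy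
    rw [mem_Ioo] at hv ⊢
    omega
  rw [hinter]
  exact hX.even_card_inter_Ioo (fun h => hxF (mem_retr_of_mem h hx))
    (fun h => hyF (mem_retr_of_mem h hy))

end Retraction

section Reflection

def reflect (n : ℤ) (X : Finset ℤ) : Finset ℤ := X.image (n - ·)

variable {n : ℤ} {X : Finset ℤ}

lemma mem_reflect {v : ℤ} : v ∈ reflect n X ↔ n - v ∈ X := by
  simp only [reflect, mem_image]
  exact ⟨by rintro ⟨x, hx, rfl⟩; rwa [sub_sub_cancel], fun h => ⟨n - v, h, sub_sub_cancel n v⟩⟩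

lemma card_reflect : (reflect n X).card = X.card :=
  card_image_of_injective _ sub_right_injective

lemma reflect_reflect : reflect n (reflect n X) = X := by
  ext v
  rw [mem_reflect, mem_reflect, sub_sub_cancel]

lemma reflect_inter_Ioo (x y : ℤ) :
    reflect n X ∩ Ioo x y = reflect n (X ∩ Ioo (n - y) (n - x)) := by
  ext v
  simp only [mem_inter, mem_reflect, mem_Ioo]
  exact and_congr_right fun _ => by omega

lemma retr_reflect (hn : 0 ≤ n) : retr n (reflect n X) = reflect n (retr n X) := by
  simp only [retr, reflect, image_image]
  exact image_congr fun x _ => by simp only [Function.comp_apply]; omega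

lemma isPaired_reflect (hX : IsPaired X) : IsPaired (reflect n X) := by
  refine isPaired_iff.2 fun x hx => ?_
  have : (reflect n X).filter (x < ·) = reflect n (X.filter (· < n - x)) := by
    ext v
    simp only [mem_filter, mem_reflect]
    exact and_congr_right fun _ => by omega
  rw [this, card_reflect]
  exact (hX.filter_lt (mem_reflect.not.1 hx)).even_card

lemma isGale_reflect {a b : ℤ} (hX : IsGale a b X) : IsGale (n - b) (n - a) (reflect n X) := by
  refine ⟨fun v hv => ?_, fun x hx y hy hxX hyX hxy => ?_⟩
  · have := mem_Icc.1 (hX.1 (mem_reflect.1 hv))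
    rw [mem_Icc]
    omega
  · rw [reflect_inter_Ioo, card_reflect]
    rw [mem_Icc] at hx hy
    exact hX.2 _ (mem_Icc.2 (by omega)) _ (mem_Icc.2 (by omega)) (mem_reflect.not.1 hyX)
      (mem_reflect.not.1 hxX) (by omega)

end Reflection

section Gale

variable {a b : ℤ} {S : Finset ℤ}

lemma IsGale.inter_Icc (hS : IsGale a b S) {c d : ℤ} (hac : a ≤ c) (hdb : d ≤ b) :
    IsGale c d (S ∩ Icc c d) := by
  refine ⟨inter_subset_right, fun x hx y hy hxS hyS hxy => ?_⟩
  rw [mem_Icc] at hx hy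
  have hsub : Ioo x y ⊆ Icc c d := fun v hv => by rw [mem_Ioo] at hv; rw [mem_Icc]; omega
  rw [inter_assoc, inter_eq_right.2 hsub]
  exact hS.2 x (mem_Icc.2 (by omega)) y (mem_Icc.2 (by omega))
    (fun h => hxS (mem_inter.2 ⟨h, mem_Icc.2 hx⟩))
    (fun h => hyS (mem_inter.2 ⟨h, mem_Icc.2 hy⟩)) hxy

lemma IsGale.isPaired_inter_Ioo (hS : IsGale a b S) {c d : ℤ} (hc : c ∈ Icc a b)
    (hd : d ∈ Icc a b) (hcS : c ∉ S) (hdS : d ∉ S) : IsPaired (S ∩ Ioo c d) := by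
  refine isPaired_iff.2 fun x hx => ?_
  have : (S ∩ Ioo c d).filter (x < ·) = S ∩ Ioo (max c x) d := by
    ext v
    simp only [mem_filter, mem_inter, mem_Ioo, max_lt_iff]
    tauto
  rw [this]
  by_cases hlt : max c x < d
  · have hx' : max c x ∉ S := by
      rcases le_or_gt x c with h | h
      · rwa [max_eq_left h]
      · rw [max_eq_right h.le]
        exact fun hxS => hx (mem_inter.2 ⟨hxS, mem_Ioo.2 ⟨h, by omega⟩⟩)
    rw [mem_Icc] at hc hd
    exact hS.2 _ (mem_Icc.2 (by omega)) d (mem_Icc.2 hd) hx' hdS hlt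
  · rw [Ioo_eq_empty hlt, inter_empty, card_empty]
    exact Even.zero

lemma IsGale.isPaired_erase (hS : IsGale a b S) (hb : b ∉ S) (heven : Even (S.erase a).card) :
    IsPaired (S.erase a) := by
  refine isPaired_iff.2 fun x hx => ?_
  have hSab : ∀ v ∈ S.erase a, a < v ∧ v < b := fun v hv => by
    obtain ⟨hva, hv⟩ := mem_erase.1 hv
    have := mem_Icc.1 (hS.1 hv)
    have : v ≠ b := ne_of_mem_of_not_mem hv hb
    omega
  rcases le_or_gt x a with hxa | hxa
  · rwa [filter_true_of_mem fun v hv => by have := hSab v hv; omega]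
  have hxS : x ∉ S := fun h => hx (mem_erase.2 ⟨by omega, h⟩)
  have : (S.erase a).filter (x < ·) = S ∩ Ioo x b := by
    ext v
    simp only [mem_filter, mem_inter, mem_Ioo]
    constructor
    · rintro ⟨hv, hxv⟩
      exact ⟨(mem_erase.1 hv).2, hxv, (hSab v hv).2⟩
    · rintro ⟨hv, hxv, -⟩
      exact ⟨mem_erase.2 ⟨by omega, hv⟩, hxv⟩
  rw [this]
  rcases lt_or_ge x b with hxb | hxb
  · exact hS.2 x (mem_Icc.2 ⟨hxa.le, hxb.le⟩) b (mem_Icc.2 ⟨by omega, le_rfl⟩) hxS hb hxb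
  · rw [Ioo_eq_empty (by omega), inter_empty, card_empty]
    exact Even.zero

end Gale

section Blocks

/-- The set `X` of `𝒳_n(d,k)` with parameters `i`, `r`, `Y`, before retraction. -/
def blocks (k : ℕ) (i : ℤ) (r : ℕ) (Y : Finset ℤ) : Finset ℤ :=
  Icc i (i + 2 * r - 1) ∪ Y ∪ Icc (i + k) (i + k + 2 * r - 1)

variable {m k n r : ℕ} {i : ℤ} {X Y : Finset ℤ}

lemma memX_iff : MemX m k n X ↔ ∃ (i : ℤ) (r : ℕ) (Y : Finset ℤ), 1 ≤ r ∧ r ≤ m ∧ IsPaired Y ∧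
    Y.card = 2 * (m - r) ∧ Y ⊆ Icc (i + 2 * r + 1) (i + k - 2) ∧ X = blocks k i r Y ∧
    2 * m + 1 ≤ (retr n X).card :=
  Iff.rfl

lemma mem_blocks {x : ℤ} : x ∈ blocks k i r Y ↔
    (i ≤ x ∧ x ≤ i + 2 * r - 1) ∨ x ∈ Y ∨ (i + k ≤ x ∧ x ≤ i + k + 2 * r - 1) := by
  simp only [blocks, mem_union, mem_Icc, or_assoc]

lemma card_Icc_union_union_Icc {a b c d : ℤ} (hY : Y ⊆ Ioo b c) (hbc : b < c) :
    (Icc a b ∪ Y ∪ Icc c d).card = (b + 1 - a).toNat + Y.card + (d + 1 - c).toNat := by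
  rw [card_union_of_disjoint, card_union_of_disjoint, Int.card_Icc, Int.card_Icc]
  · exact disjoint_left.2 fun v hv hvY => by
      have := mem_Ioo.1 (hY hvY)
      rw [mem_Icc] at hv
      omega
  · refine disjoint_left.2 fun v hv hv' => ?_
    rw [mem_Icc] at hv'
    rcases mem_union.1 hv with hv | hv
    · rw [mem_Icc] at hv
      omega
    · have := mem_Ioo.1 (hY hv)
      omega

lemma blocks_subset_Icc (hYs : Y ⊆ Icc (i + 2 * r + 1) (i + k - 2)) :
    blocks k i r Y ⊆ Icc i (i + k + 2 * r - 1) := fun x hx => by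
  rw [mem_Icc]
  rcases mem_blocks.1 hx with h | h | h
  · omega
  · have := mem_Icc.1 (hYs h)
    omega
  · omega

lemma isPaired_blocks (hk : 2 * r ≤ k) (hY : IsPaired Y)
    (hYs : Y ⊆ Icc (i + 2 * r + 1) (i + k - 2)) : IsPaired (blocks k i r Y) := by
  have hev : ∀ a : ℤ, Even (a + 2 * r - 1 + 1 - a) := fun a => ⟨r, by ring⟩
  refine ((isPaired_Icc (hev i)).union hY ?_).union (isPaired_Icc (hev _)) ?_
  · refine disjoint_left.2 fun v hv hvY => ?_
    have := mem_Icc.1 (hYs hvY)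
    rw [mem_Icc] at hv
    omega
  · refine disjoint_left.2 fun v hv hv' => ?_
    rw [mem_Icc] at hv'
    rcases mem_union.1 hv with hv | hv
    · rw [mem_Icc] at hv
      omega
    · have := mem_Icc.1 (hYs hv)
      omega

lemma reflect_blocks (n : ℤ) :
    reflect n (blocks k i r Y) = blocks k (n - i - k - 2 * r + 1) r (reflect n Y) := by
  ext v
  simp only [mem_reflect, mem_blocks]
  by_cases h : n - v ∈ Y <;> simp only [h, true_or, or_true, false_or]
  omega

lemma reflect_mem_facets {F : Finset ℤ} (hF : F ∈ Facets m k n) : reflect n F ∈ Facets m k n := by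
  obtain ⟨_, hX, rfl⟩ := hF
  obtain ⟨i, r, Y, hr, hrm, hY, hYc, hYs, rfl, hcard⟩ := memX_iff.1 hX
  refine ⟨_, memX_iff.2 ⟨n - i - k - 2 * r + 1, r, reflect n Y, hr, hrm, isPaired_reflect hY,
    by rw [card_reflect, hYc], fun y hy => ?_, rfl, ?_⟩, ?_⟩
  · have := mem_Icc.1 (hYs (mem_reflect.1 hy))
    rw [mem_Icc]
    omega
  · rwa [← reflect_blocks, retr_reflect (Int.natCast_nonneg n), card_reflect]
  · rw [← reflect_blocks, retr_reflect (Int.natCast_nonneg n)]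

end Blocks

section Windows

variable {F Z : Finset ℤ} {d l : ℕ}

lemma elt_add_one {t : ℕ} (ht : t < F.card) : elt F (t + 1) = F.orderEmbOfFin rfl ⟨t, ht⟩ := by
  rw [orderEmbOfFin_apply, elt, Nat.add_sub_cancel, List.getD_eq_getElem _ _ (by simpa using ht)]
  rfl

lemma strictMonoOn_elt : StrictMonoOn (elt F) (Set.Icc 1 F.card) := by
  rintro s ⟨hs, hs'⟩ t ⟨ht, ht'⟩ hst
  obtain ⟨s, rfl⟩ := Nat.exists_eq_add_of_le' hs
  obtain ⟨t, rfl⟩ := Nat.exists_eq_add_of_le' ht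
  rw [elt_add_one (by omega), elt_add_one (by omega)]
  exact (F.orderEmbOfFin rfl).strictMono (Fin.mk_lt_mk.2 (by omega))

lemma mem_iff_exists_elt {x : ℤ} : x ∈ F ↔ ∃ t ∈ Icc 1 F.card, elt F t = x := by
  constructor
  · intro hx
    rw [← mem_coe, ← range_orderEmbOfFin F rfl] at hx
    obtain ⟨⟨t, ht⟩, rfl⟩ := hx
    exact ⟨t + 1, mem_Icc.2 ⟨by omega, by omega⟩, elt_add_one ht⟩
  · rintro ⟨t, ht, rfl⟩
    obtain ⟨t, rfl⟩ := Nat.exists_eq_add_of_le' (mem_Icc.1 ht).1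
    rw [elt_add_one (by have := (mem_Icc.1 ht).2; omega)]
    exact orderEmbOfFin_mem _ _ _

lemma tsimp_eq_inter_Icc (hd : 1 ≤ d) (hl : 1 ≤ l) (hlF : l + d - 1 ≤ F.card) :
    Tsimp d F l = F ∩ Icc (elt F l) (elt F (l + d - 1)) := by
  have hmono := strictMonoOn_elt (F := F)
  ext x
  rw [Tsimp, mem_image, mem_inter, mem_Icc, mem_iff_exists_elt]
  constructor
  · rintro ⟨t, ht, rfl⟩
    rw [mem_Icc] at ht
    have hmem : ∀ s, l ≤ s → s ≤ l + d - 1 → s ∈ Set.Icc 1 F.card := fun s h₁ h₂ =>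
      ⟨by omega, by omega⟩
    refine ⟨⟨t, mem_Icc.2 ⟨by omega, by omega⟩, rfl⟩, ?_, ?_⟩
    · exact (hmono.le_iff_le (hmem l le_rfl (by omega)) (hmem t ht.1 ht.2)).2 ht.1
    · exact (hmono.le_iff_le (hmem t ht.1 ht.2) (hmem _ (by omega) le_rfl)).2 ht.2
  · rintro ⟨⟨t, ht, rfl⟩, h₁, h₂⟩
    rw [mem_Icc] at ht
    rw [hmono.le_iff_le ⟨hl, by omega⟩ ⟨by omega, by omega⟩] at h₁
    rw [hmono.le_iff_le ⟨by omega, by omega⟩ ⟨by omega, hlF⟩] at h₂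
    exact ⟨t, mem_Icc.2 ⟨h₁, h₂⟩, rfl⟩

lemma exists_eq_tsimp {a b : ℤ} (hZ : F ∩ Icc a b = Z) (hd : 1 ≤ d) (hcard : Z.card = d) :
    ∃ l : ℕ, 1 ≤ l ∧ l ≤ F.card - d + 1 ∧ Z = Tsimp d F l := by
  have hmono := strictMonoOn_elt (F := F)
  set A := (Icc 1 F.card).filter (elt F · ∈ Icc a b)
  have hZA : Z = A.image (elt F) := by
    ext x
    rw [← hZ, mem_inter, mem_iff_exists_elt, mem_image]
    simp only [A, mem_filter]
    constructor
    · rintro ⟨⟨t, ht, rfl⟩, hx⟩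
      exact ⟨t, ⟨ht, hx⟩, rfl⟩
    · rintro ⟨t, ⟨ht, hx⟩, rfl⟩
      exact ⟨⟨t, ht, rfl⟩, hx⟩
  have hAp : ∀ t ∈ A, t ∈ Set.Icc 1 F.card := fun t ht => by
    simpa using (mem_filter.1 ht).1
  have hA : A.card = d := by
    rw [← hcard, hZA, card_image_of_injOn (hmono.injOn.mono hAp)]
  have hne : A.Nonempty := card_pos.1 (by omega)
  have hmin : 1 ≤ A.min' hne ∧ A.min' hne ≤ F.card := hAp _ (A.min'_mem hne)
  have hmax : 1 ≤ A.max' hne ∧ A.max' hne ≤ F.card := hAp _ (A.max'_mem hne)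
  have hAI : A = Icc (A.min' hne) (A.max' hne) := by
    refine Subset.antisymm (fun t ht => mem_Icc.2 ⟨A.min'_le t ht, A.le_max' t ht⟩) fun t ht => ?_
    rw [mem_Icc] at ht
    have ht' : t ∈ Set.Icc 1 F.card := ⟨hmin.1.trans ht.1, ht.2.trans hmax.2⟩
    have h₁ := mem_Icc.1 (mem_filter.1 (A.min'_mem hne)).2
    have h₂ := mem_Icc.1 (mem_filter.1 (A.max'_mem hne)).2
    have := (hmono.le_iff_le hmin ht').2 ht.1
    have := (hmono.le_iff_le ht' hmax).2 ht.2
    exact mem_filter.2 ⟨by simpa using ht', mem_Icc.2 ⟨by omega, by omega⟩⟩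
  rw [hAI, Nat.card_Icc] at hA
  refine ⟨A.min' hne, hmin.1, by omega, ?_⟩
  rw [hZA, Tsimp, show A.min' hne + d - 1 = A.max' hne by omega]
  conv_lhs => rw [hAI]

end Windows

section Forward

variable {m k r : ℕ} {i : ℤ} {Y : Finset ℤ}

lemma card_retr_blocks_le {n : ℤ} (hrm : r ≤ m) (hYc : Y.card = 2 * (m - r))
    (h : i + 2 * r - 1 ≤ 0 ∨ n ≤ i + k) : (retr n (blocks k i r Y)).card ≤ 2 * m + 1 := by
  have hsplit : (retr n (blocks k i r Y)).card ≤ (retr n (Icc i (i + 2 * r - 1))).card + Y.card +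
      (retr n (Icc (i + k) (i + k + 2 * r - 1))).card := by
    have h₁ := card_union_le (retr n (Icc i (i + 2 * r - 1)) ∪ retr n Y)
      (retr n (Icc (i + k) (i + k + 2 * r - 1)))
    have h₂ := card_union_le (retr n (Icc i (i + 2 * r - 1))) (retr n Y)
    have h₃ : (retr n Y).card ≤ Y.card := card_image_le
    rw [blocks, retr_union, retr_union]
    omega
  have hcard : ∀ a : ℤ, (retr n (Icc a (a + 2 * r - 1))).card ≤ 2 * r := fun a =>
    card_image_le.trans (by rw [Int.card_Icc]; omega)
  have hsingle : ∀ a : ℤ, (a + 2 * r - 1 ≤ 0 ∨ n ≤ a) →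
      (retr n (Icc a (a + 2 * r - 1))).card ≤ 1 := fun a ha => card_le_one.2 fun u hu v hv => by
    obtain ⟨x, hx, rfl⟩ := mem_retr.1 hu
    obtain ⟨y, hy, rfl⟩ := mem_retr.1 hv
    rw [mem_Icc] at hx hy
    omega
  have := hcard i
  have := hcard (i + k)
  rcases h with h | h
  · have := hsingle i (Or.inl h)
    omega
  · have := hsingle (i + k) (Or.inr h)
    omega

lemma retr_blocks_eq_inter_Icc {n : ℤ} (hk : 2 * r ≤ k) (hYs : Y ⊆ Icc (i + 2 * r + 1) (i + k - 2))
    (hbot : 0 ≤ i + 2 * r - 1) (htop : i + k ≤ n) :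
    retr n (blocks k i r Y) = blocks k i r Y ∩ Icc 0 n := by
  have hY : ∀ y ∈ Y, i + 2 * r + 1 ≤ y ∧ y ≤ i + k - 2 := fun y hy => mem_Icc.1 (hYs hy)
  refine retr_eq_inter_Icc (by omega) (fun x hx hx0 => ?_) (fun x hx hxn => ?_)
  · rcases mem_blocks.1 hx with h | h | h
    · exact mem_blocks.2 (Or.inl ⟨by omega, hbot⟩)
    · have := hY x h
      omega
    · omega
  · rcases mem_blocks.1 hx with h | h | h
    · omega
    · have := hY x h
      omega
    · exact mem_blocks.2 (Or.inr (Or.inr ⟨htop, by omega⟩))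

lemma blocks_inter_Icc {w₁ w₂ : ℤ} (hk : 2 * r ≤ k) (hYs : Y ⊆ Icc (i + 2 * r + 1) (i + k - 2))
    (h₁ : i ≤ w₁ ∧ w₁ ≤ i + 2 * r - 1) (h₂ : i + k ≤ w₂ ∧ w₂ ≤ i + k + 2 * r - 1) :
    blocks k i r Y ∩ Icc w₁ w₂ = Icc w₁ (i + 2 * r - 1) ∪ Y ∪ Icc (i + k) w₂ := by
  ext v
  rw [mem_inter, mem_blocks]
  simp only [mem_union, mem_Icc]
  by_cases hv : v ∈ Y
  · have := mem_Icc.1 (hYs hv)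
    simp only [hv, true_or, or_true, true_and, iff_true]
    omega
  · simp only [hv, false_or, or_false]
    omega

/-- The window meets both outer blocks, since `Y` and a single block have only `2m` points. -/
lemma eq_add_of_blocks_inter_Icc {w₁ w₂ : ℤ} {Z : Finset ℤ} (hk : 2 * r ≤ k) (hrm : r ≤ m)
    (hYc : Y.card = 2 * (m - r)) (hYs : Y ⊆ Icc (i + 2 * r + 1) (i + k - 2))
    (hZ : blocks k i r Y ∩ Icc w₁ w₂ = Z) (hw₁ : w₁ ∈ Z) (hw₂ : w₂ ∈ Z)
    (hcard : Z.card = 2 * m + 1) : w₂ = w₁ + k := by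
  have hmem : ∀ v, v ∈ Z ↔ v ∈ blocks k i r Y ∧ w₁ ≤ v ∧ v ≤ w₂ := fun v => by
    rw [← hZ, mem_inter, mem_Icc]
  have hY : ∀ y ∈ Y, i + 2 * r + 1 ≤ y ∧ y ≤ i + k - 2 := fun y hy => mem_Icc.1 (hYs hy)
  have hblock : ∀ a : ℤ, (Icc a (a + 2 * r - 1)).card = 2 * r := fun a => by
    rw [Int.card_Icc]
    omega
  have h₁ : w₁ ≤ i + 2 * r - 1 := by
    by_contra h
    have hsub : Z ⊆ Y ∪ Icc (i + k) (i + k + 2 * r - 1) := fun v hv => by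
      obtain ⟨hv, hv₁, -⟩ := (hmem v).1 hv
      rcases mem_blocks.1 hv with hv | hv | hv
      · omega
      · exact mem_union_left _ hv
      · exact mem_union_right _ (mem_Icc.2 hv)
    have := (card_le_card hsub).trans (card_union_le _ _)
    have := hblock (i + k)
    omega
  have h₂ : i + k ≤ w₂ := by
    by_contra h
    have hsub : Z ⊆ Icc i (i + 2 * r - 1) ∪ Y := fun v hv => by
      obtain ⟨hv, -, hv₂⟩ := (hmem v).1 hv
      rcases mem_blocks.1 hv with hv | hv | hv
      · exact mem_union_left _ (mem_Icc.2 hv)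
      · exact mem_union_right _ hv
      · omega
    have := (card_le_card hsub).trans (card_union_le _ _)
    have := hblock i
    omega
  have hw₁i : i ≤ w₁ := (mem_Icc.1 (blocks_subset_Icc hYs ((hmem w₁).1 hw₁).1)).1
  have hw₂i : w₂ ≤ i + k + 2 * r - 1 := (mem_Icc.1 (blocks_subset_Icc hYs ((hmem w₂).1 hw₂).1)).2
  rw [← hZ, blocks_inter_Icc hk hYs ⟨hw₁i, h₁⟩ ⟨h₂, hw₂i⟩,
    card_Icc_union_union_Icc (fun y hy => mem_Ioo.2 (by have := hY y hy; omega)) (by omega),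
    hYc] at hcard
  omega

theorem exists_inter_Icc_eq_of_memX {m k n : ℕ} {X Z : Finset ℤ} {w₁ w₂ : ℤ}
    (hk : 2 * m ≤ k) (hn : k ≤ n) (hX : MemX m k n X) (hZ : retr n X ∩ Icc w₁ w₂ = Z)
    (hw₁ : w₁ ∈ Z) (hw₂ : w₂ ∈ Z) (hcard : Z.card = 2 * m + 1) :
    ∃ j : ℤ, 0 ≤ j ∧ j + k ≤ n ∧ retr n X ∩ Icc j (j + k) = Z ∧
      ((0 : ℤ) ∈ Z ∨ (n : ℤ) ∈ Z ∨ j ∈ Z ∧ j + k ∈ Z) := by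
  obtain ⟨i, r, Y, hr, hrm, -, hYc, hYs, rfl, -⟩ := memX_iff.1 hX
  have hZF : Z ⊆ retr n (blocks k i r Y) := hZ ▸ inter_subset_left
  have hF := retr_subset_Icc_of_subset (n := n) (blocks_subset_Icc hYs)
  by_cases hbot : i + 2 * r - 1 < 0
  · have hZF' : Z = retr n (blocks k i r Y) :=
      eq_of_subset_of_card_le hZF (hcard ▸ card_retr_blocks_le hrm hYc (Or.inl hbot.le))
    refine ⟨0, le_rfl, by omega, ?_, Or.inl ?_⟩
    · rw [hZF']
      exact inter_eq_left.2 (hF.trans (Icc_subset_Icc (by omega) (by omega)))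
    · rw [hZF']
      exact mem_retr.2 ⟨i, mem_blocks.2 (Or.inl ⟨le_rfl, by omega⟩), by omega⟩
  by_cases htop : (n : ℤ) < i + k
  · have hZF' : Z = retr n (blocks k i r Y) :=
      eq_of_subset_of_card_le hZF (hcard ▸ card_retr_blocks_le hrm hYc (Or.inr htop.le))
    refine ⟨n - k, by omega, by omega, ?_, Or.inr (Or.inl ?_)⟩
    · rw [hZF']
      exact inter_eq_left.2 (hF.trans (Icc_subset_Icc (by omega) (by omega)))
    · rw [hZF']
      exact mem_retr.2 ⟨i + k, mem_blocks.2 (Or.inr (Or.inr ⟨le_rfl, by omega⟩)), by omega⟩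
  have hw : Icc w₁ w₂ ⊆ Icc 0 (n : ℤ) := by
    have h₁ := mem_Icc.1 (retr_subset_Icc (by omega) (hZF hw₁))
    have h₂ := mem_Icc.1 (retr_subset_Icc (by omega) (hZF hw₂))
    exact Icc_subset_Icc h₁.1 h₂.2
  rw [retr_blocks_eq_inter_Icc (by omega) hYs (by omega) (by omega)] at hZ ⊢
  rw [inter_assoc, inter_eq_right.2 hw] at hZ
  obtain rfl := eq_add_of_blocks_inter_Icc (by omega) hrm hYc hYs hZ hw₁ hw₂ hcard
  refine ⟨w₁, (mem_Icc.1 (hw (left_mem_Icc.2 (by omega)))).1,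
    (mem_Icc.1 (hw (right_mem_Icc.2 (by omega)))).2, ?_, Or.inr (Or.inr ⟨hw₁, hw₂⟩)⟩
  rw [inter_assoc, inter_eq_right.2 hw, hZ]

end Forward

section Reverse

lemma exists_eq_Icc_union_inter_Ioo_union_Icc {S : Finset ℤ} {a b : ℤ} (hS : S ⊆ Icc a b)
    (ha : a ∈ S) (hb : b ∈ S) (hcard : S.card < (b + 1 - a).toNat) :
    ∃ c d, a < c ∧ c ≤ d ∧ d < b ∧ c ∉ S ∧ d ∉ S ∧
      S = Icc a (c - 1) ∪ (S ∩ Ioo c d) ∪ Icc (d + 1) b := by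
  obtain ⟨x, hx, hxS⟩ := exists_mem_notMem_of_card_lt_card (s := S) (t := Icc a b)
    (by rwa [Int.card_Icc])
  obtain ⟨c, ⟨hc, hcS⟩, hcmin⟩ := Int.exists_least_of_bdd (P := fun z => z ∈ Icc a b ∧ z ∉ S)
    ⟨a, fun z hz => (mem_Icc.1 hz.1).1⟩ ⟨x, hx, hxS⟩
  obtain ⟨d, ⟨hd, hdS⟩, hdmax⟩ := Int.exists_greatest_of_bdd (P := fun z => z ∈ Icc a b ∧ z ∉ S)
    ⟨b, fun z hz => (mem_Icc.1 hz.1).2⟩ ⟨x, hx, hxS⟩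
  have hac : a ≠ c := ne_of_mem_of_not_mem ha hcS
  have hdb : b ≠ d := ne_of_mem_of_not_mem hb hdS
  have hcd := hdmax c ⟨hc, hcS⟩
  rw [mem_Icc] at hc hd
  refine ⟨c, d, by omega, hcd, by omega, hcS, hdS, ?_⟩
  ext z
  simp only [mem_union, mem_inter, mem_Ioo, mem_Icc]
  constructor
  · intro hz
    have := mem_Icc.1 (hS hz)
    have : z ≠ c := ne_of_mem_of_not_mem hz hcS
    have : z ≠ d := ne_of_mem_of_not_mem hz hdS
    simp only [hz, true_and]
    omega
  · rintro ((hz | ⟨hz, -⟩) | hz)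
    · by_contra h
      have := hcmin z ⟨mem_Icc.2 ⟨hz.1, by omega⟩, h⟩
      omega
    · exact hz
    · by_contra h
      have := hdmax z ⟨mem_Icc.2 ⟨by omega, hz.2⟩, h⟩
      omega

lemma exists_eq_filter_lt_union_Icc {S : Finset ℤ} {a : ℤ} (hne : S.Nonempty)
    (ha : ∀ x ∈ S, a < x) :
    ∃ c e, a ≤ c ∧ c < e ∧ c ∉ S ∧ e ∈ S ∧ S = S.filter (· < c) ∪ Icc (c + 1) e := by
  set e := S.max' hne
  have he : e ∈ S := S.max'_mem hne
  obtain ⟨c, ⟨hc, hcS⟩, hcmax⟩ := Int.exists_greatest_of_bdd (P := fun z => z ∈ Icc a e ∧ z ∉ S)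
    ⟨e, fun z hz => (mem_Icc.1 hz.1).2⟩
    ⟨a, mem_Icc.2 ⟨le_rfl, (ha e he).le⟩, fun h => (ha a h).false⟩
  have hce : c ≠ e := (ne_of_mem_of_not_mem he hcS).symm
  rw [mem_Icc] at hc
  refine ⟨c, e, hc.1, by omega, hcS, he, ?_⟩
  ext z
  simp only [mem_union, mem_filter, mem_Icc]
  constructor
  · intro hz
    have := S.le_max' z hz
    have : z ≠ c := ne_of_mem_of_not_mem hz hcS
    simp only [hz, true_and]
    omega
  · rintro (⟨hz, -⟩ | hz)
    · exact hz
    · by_contra h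
      have := hcmax z ⟨mem_Icc.2 ⟨by omega, hz.2⟩, h⟩
      omega

variable {m k n : ℕ} {i : ℤ} {Z : Finset ℤ}

theorem exists_facet_inter_Icc_eq_of_endpoints_mem (hk : 2 * m + 1 ≤ k)
    (hcard : Z.card = 2 * m + 1) (hi : 0 ≤ i) (hin : i + k ≤ n) (hg : IsGale i (i + k) Z)
    (hiZ : i ∈ Z) (hkZ : i + k ∈ Z) : ∃ F ∈ Facets m k n, F ∩ Icc i (i + k) = Z := by
  obtain ⟨c, d, hic, hcd, hdk, hcZ, hdZ, hZ⟩ :=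
    exists_eq_Icc_union_inter_Ioo_union_Icc hg.1 hiZ hkZ (by rw [hcard]; omega)
  set Y := Z ∩ Ioo c d
  have hY : IsPaired Y :=
    hg.isPaired_inter_Ioo (mem_Icc.2 ⟨by omega, by omega⟩) (mem_Icc.2 ⟨by omega, by omega⟩) hcZ hdZ
  have hYcd : Y ⊆ Ioo c d := inter_subset_right
  obtain ⟨q, hq⟩ := hY.even_card
  have hsize := hcard
  rw [hZ, card_Icc_union_union_Icc (hYcd.trans (Ioo_subset_Ioo (by omega) (by omega))) (by omega)]
    at hsize
  -- chosen so that the two outer runs of `Z` have `2r + 1` points together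
  set r := m - q
  have hYs : Y ⊆ Icc (d + 1 - k + 2 * r + 1) (d + 1 - k + k - 2) := fun y hy => by
    have := mem_Ioo.1 (hYcd hy)
    rw [mem_Icc]
    omega
  have hXZ : blocks k (d + 1 - k) r Y ∩ Icc i (i + k) = Z := by
    rw [blocks_inter_Icc (by omega) hYs ⟨by omega, by omega⟩ ⟨by omega, by omega⟩,
      show d + 1 - k + 2 * (r : ℤ) - 1 = c - 1 by omega, show d + 1 - (k : ℤ) + k = d + 1 by ring,
      ← hZ]
  have hZF : Z ⊆ retr n (blocks k (d + 1 - k) r Y) := fun z hz =>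
    mem_retr_of_mem (inter_subset_left (hXZ.symm ▸ hz))
      (mem_Icc.2 (by have := mem_Icc.1 (hg.1 hz); omega))
  refine ⟨_, ⟨_, memX_iff.2 ⟨d + 1 - k, r, Y, by omega, by omega, hY, by omega, hYs, rfl,
    hcard ▸ card_le_card hZF⟩, rfl⟩, ?_⟩
  exact Subset.antisymm (retr_inter_Icc_subset hi hin hiZ hkZ hXZ.le)
    fun z hz => mem_inter.2 ⟨hZF hz, hg.1 hz⟩

theorem mem_facets_of_zero_mem (hm : 1 ≤ m) (hn : k ≤ n)
    (hcard : Z.card = 2 * m + 1) (hg : IsGale 0 k Z) (h0 : 0 ∈ Z) (hkZ : (k : ℤ) ∉ Z) :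
    Z ∈ Facets m k n := by
  have hZ'c : (Z.erase 0).card = 2 * m := by rw [card_erase_of_mem h0, hcard]; omega
  have hZ' : IsPaired (Z.erase 0) := hg.isPaired_erase hkZ ⟨m, by omega⟩
  have hbound : ∀ z ∈ Z.erase 0, 0 < z ∧ z < k := fun z hz => by
    obtain ⟨hz0, hz⟩ := mem_erase.1 hz
    have := mem_Icc.1 (hg.1 hz)
    have : z ≠ k := ne_of_mem_of_not_mem hz hkZ
    omega
  obtain ⟨c, e, hc, hce, hcZ, heZ, hsplit⟩ := exists_eq_filter_lt_union_Icc
    (card_pos.1 (by omega)) fun z hz => (hbound z hz).1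
  have hek := (hbound e heZ).2
  set Y := (Z.erase 0).filter (· < c)
  have hY : IsPaired Y := hZ'.filter_lt hcZ
  obtain ⟨q, hq⟩ := hY.even_card
  have hsize : (Z.erase 0).card = Y.card + (e - c).toNat := by
    conv_lhs => rw [hsplit]
    rw [card_union_of_disjoint (disjoint_left.2 fun v hv hv' => by
      rw [mem_filter] at hv; rw [mem_Icc] at hv'; omega), Int.card_Icc]
    congr 2
    ring
  -- the top run of `Z \ {0}` is the top block; the bottom block retracts to `0`
  set g := m - q
  have hYbound : ∀ y ∈ Y, 0 < y ∧ y < c := fun y hy =>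
    ⟨(hbound y (mem_filter.1 hy).1).1, (mem_filter.1 hy).2⟩
  have hF : retr n (blocks k (c + 1 - k) g Y) = Z := by
    rw [blocks, retr_union, retr_union, retr_Icc_eq_singleton_zero (by omega) (by omega),
      retr_eq_self fun y hy => mem_Icc.2 (by have := hYbound y hy; omega),
      retr_eq_self fun x hx => mem_Icc.2 (by rw [mem_Icc] at hx; omega),
      show c + 1 - (k : ℤ) + k = c + 1 by ring, show c + 1 + 2 * (g : ℤ) - 1 = e by omega,
      union_assoc, ← insert_eq, ← hsplit, insert_erase h0]
  refine ⟨_, memX_iff.2 ⟨c + 1 - k, g, Y, by omega, by omega, hY, by omega, fun y hy => ?_, rfl,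
    by rw [hF, hcard]⟩, hF.symm⟩
  have := hYbound y hy
  rw [mem_Icc]
  omega

theorem exists_facet_inter_Icc_eq (hm : 1 ≤ m) (hk : 2 * m + 1 ≤ k) (hcard : Z.card = 2 * m + 1)
    (hi : 0 ≤ i) (hin : i + k ≤ n) (hg : IsGale i (i + k) Z)
    (hends : (0 : ℤ) ∈ Z ∨ (n : ℤ) ∈ Z ∨ i ∈ Z ∧ i + k ∈ Z) :
    ∃ F ∈ Facets m k n, F ∩ Icc i (i + k) = Z := by
  by_cases hboth : i ∈ Z ∧ i + k ∈ Z
  · exact exists_facet_inter_Icc_eq_of_endpoints_mem hk hcard hi hin hg hboth.1 hboth.2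
  refine ⟨Z, ?_, inter_eq_left.2 hg.1⟩
  rcases hends with h0 | hnZ | h
  · obtain rfl : i = 0 := le_antisymm (mem_Icc.1 (hg.1 h0)).1 hi
    rw [zero_add] at hg hboth hin
    exact mem_facets_of_zero_mem hm (by omega) hcard hg h0 fun hkZ => hboth ⟨h0, hkZ⟩
  · -- reflected, this is the previous case
    have hik : i + k = n := le_antisymm hin (mem_Icc.1 (hg.1 hnZ)).2
    rw [← reflect_reflect (n := (n : ℤ)) (X := Z)]
    refine reflect_mem_facets (mem_facets_of_zero_mem hm (by omega)
      (by rw [card_reflect, hcard]) ?_ ?_ ?_)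
    · have := isGale_reflect (n := (n : ℤ)) hg
      rwa [show (n : ℤ) - (i + k) = 0 by omega, show (n : ℤ) - i = k by omega] at this
    · rwa [mem_reflect, sub_zero]
    · rw [mem_reflect, show (n : ℤ) - k = i by omega]
      exact fun hiZ => hboth ⟨hiZ, hik ▸ hnZ⟩
  · exact absurd h hboth

end Reverse

theorem statement8_general (m k n : ℕ) (hm : 2 ≤ m) (hk : 2 * m + 1 ≤ k) (hn : k ≤ n)
    (Z : Finset ℤ) (hcard : Z.card = 2 * m + 1) :
    (∃ F ∈ Facets m k n, ∃ l : ℕ, 1 ≤ l ∧ l ≤ F.card - (2 * m + 1) + 1 ∧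
        Z = Tsimp (2 * m + 1) F l) ↔
    (∃ i : ℤ, 0 ≤ i ∧ i ≤ (n : ℤ) - k ∧ IsGale i (i + k) Z ∧
        ((0 : ℤ) ∈ Z ∨ (n : ℤ) ∈ Z ∨ (i ∈ Z ∧ i + k ∈ Z))) := by
  constructor
  · rintro ⟨_, ⟨X, hX, rfl⟩, l, hl, hlF, rfl⟩
    obtain ⟨i, r, Y, -, hrm, hY, -, hYs, hXY, hXc⟩ := memX_iff.1 hX
    have hwin := tsimp_eq_inter_Icc (F := retr n X) (by omega : 1 ≤ 2 * m + 1) hl (by omega)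
    obtain ⟨j, hj, hjn, hZ, hends⟩ := exists_inter_Icc_eq_of_memX (by omega) hn hX hwin.symm
      (mem_image_of_mem _ (mem_Icc.2 ⟨le_rfl, by omega⟩))
      (mem_image_of_mem _ (mem_Icc.2 ⟨by omega, le_rfl⟩)) hcard
    have hgale := (isGale_retr (hXY ▸ isPaired_blocks (by omega) hY hYs)
      (Int.natCast_nonneg n)).inter_Icc hj hjn
    exact ⟨j, hj, by omega, hZ ▸ hgale, hends⟩
  · rintro ⟨i, hi, hin, hg, hends⟩
    obtain ⟨F, hF, hFZ⟩ := exists_facet_inter_Icc_eq (by omega) hk hcard hi (by omega) hg hends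
    exact ⟨F, hF, exists_eq_tsimp hFZ (by omega) hcard⟩

/-- a d-element set Z ⊆ [0,n] occurs as d consecutive elements of
some facet of P^{d,k,n} iff there is 0 ≤ i ≤ n-k with Z a Gale subset of
[i, i+k] containing 0, or n, or both i and i+k. -/
theorem statement8 (m k n : ℕ) (hm : 2 ≤ m) (hk : 2 * m + 1 ≤ k) (hn : k ≤ n)
    (Z : Finset ℤ) (hZ : Z ⊆ Finset.Icc 0 (n : ℤ)) (hcard : Z.card = 2 * m + 1) :
    (∃ F ∈ Facets m k n, ∃ l : ℕ, 1 ≤ l ∧ l ≤ F.card - (2 * m + 1) + 1 ∧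
        Z = Tsimp (2 * m + 1) F l) ↔
    (∃ i : ℤ, 0 ≤ i ∧ i ≤ (n : ℤ) - k ∧ IsGale i (i + k) Z ∧
        ((0 : ℤ) ∈ Z ∨ (n : ℤ) ∈ Z ∨ (i ∈ Z ∧ i + k ∈ Z))) :=
  statement8_general m k n hm hk hn Z hcard
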